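/- arXiv:2605.16868 — 3 statements merged into one kernel-verified Lean document; each statement's English description precedes it below -/
import Mathlib

section
/- Let T > 0, let F₁ be a reflection kernel with bounded parameters (γ₁, k₁) and F₂ a reflection kernel with bounded parameters (γ₂, k₂), and let X ∈ D_T(L1). Then ‖Ψ_{F₁}(X) − Ψ_{F₂}(X)‖_{T,1} ≤ k₁ k₂ ‖F₁ − F₂‖_op ‖X‖_{T,1} / ((1 − γ₁)(1 − γ₂)), where F₁ − F₂ denotes the kernel (u,v) ↦ F₁(u,v) − F₂(u,v). -/
open MeasureTheory Set Filter
open scoped ENNReal NNReal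

noncomputable section

/-- Operator norm of a kernel: `‖F‖_op = sup_{v ∈ [0,1]} ∫₀¹ |F(u,v)| du`. -/
def kernelOpNorm (F : ℝ → ℝ → ℝ) : ℝ≥0∞ :=
  ⨆ v ∈ Icc (0:ℝ) 1, ∫⁻ u in Icc (0:ℝ) 1, ENNReal.ofReal |F u v|

/-- Composition of kernels. -/
def kernelComp (F G : ℝ → ℝ → ℝ) : ℝ → ℝ → ℝ :=
  fun u v => ∫ w in Icc (0:ℝ) 1, F u w * G w v

/-- `kernelIter F (n-1)` is the `n`-fold composition `F^(n)`; so `kernelIter F 0 = F^(1) = F`. -/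
def kernelIter (F : ℝ → ℝ → ℝ) : ℕ → ℝ → ℝ → ℝ
  | 0 => F
  | n + 1 => kernelComp F (kernelIter F n)

/-- Spatial action of a kernel on `f : [0,1] × [0,T] → ℝ`. -/
def kernelApply (F f : ℝ → ℝ → ℝ) : ℝ → ℝ → ℝ :=
  fun u t => ∫ v in Icc (0:ℝ) 1, F u v * f v t

/-- `sup_{0 ≤ t ≤ T} |f_u(t)|`, valued in `ℝ≥0∞`. -/
def pathSup (T : ℝ) (f : ℝ → ℝ → ℝ) (u : ℝ) : ℝ≥0∞ :=
  ⨆ t ∈ Icc (0:ℝ) T, ENNReal.ofReal |f u t|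

/-- `‖f‖_{T,1} = ∫₀¹ sup_{0 ≤ t ≤ T} |f_u(t)| du`, valued in `ℝ≥0∞`. -/
def TNorm (T : ℝ) (f : ℝ → ℝ → ℝ) : ℝ≥0∞ :=
  ∫⁻ u in Icc (0:ℝ) 1, pathSup T f u

/-- `f ∈ D_T(L1)`. -/
structure MemDT (T : ℝ) (f : ℝ → ℝ → ℝ) : Prop where
  rightCont : ∀ u ∈ Icc (0:ℝ) 1, ∀ t ∈ Ico (0:ℝ) T, ContinuousWithinAt (f u) (Ici t) t
  leftLim : ∀ u ∈ Icc (0:ℝ) 1, ∀ t ∈ Ioc (0:ℝ) T,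
    ∃ L : ℝ, Tendsto (f u) (nhdsWithin t (Iio t)) (nhds L)
  meas : ∀ t ∈ Icc (0:ℝ) T, Measurable fun u => f u t
  finite : TNorm T f ≠ ⊤

/-- `f ∈ D_T^↑(L1)`. -/
structure MemDTup (T : ℝ) (f : ℝ → ℝ → ℝ) : Prop where
  memDT : MemDT T f
  nonneg_zero : ∀ u ∈ Icc (0:ℝ) 1, 0 ≤ f u 0
  mono : ∀ u ∈ Icc (0:ℝ) 1, MonotoneOn (f u) (Icc (0:ℝ) T)

/-- `F` is a reflection kernel with bounded parameters `(γ, k)`. -/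
structure IsReflKernel (F : ℝ → ℝ → ℝ) (γ : ℝ) (k : ℕ) : Prop where
  meas : Measurable (Function.uncurry F)
  nonneg : ∀ u ∈ Icc (0:ℝ) 1, ∀ v ∈ Icc (0:ℝ) 1, 0 ≤ F u v
  opNorm_le_one : kernelOpNorm F ≤ 1
  gamma_mem : γ ∈ Set.Ioo (0:ℝ) 1
  k_pos : 1 ≤ k
  iter_le : kernelOpNorm (kernelIter F (k - 1)) ≤ ENNReal.ofReal γ

/-- The map `π_{X,F}`: `π_{X,F}(W)_u(t) = sup_{0 ≤ s ≤ t} max(−X_u(s) + (F W)_u(s), 0)`. -/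
def piMap (X F W : ℝ → ℝ → ℝ) : ℝ → ℝ → ℝ :=
  fun u t => ⨆ s : Icc (0:ℝ) t, max (-(X u s.1) + kernelApply F W u s.1) 0

end

noncomputable section

/-- `Y = Ψ_F(X)`: `Y` is the (unique) fixed point of `π_{X,F}` in `D_T^↑(L1)`. -/
def IsRegulator (T : ℝ) (X F Y : ℝ → ℝ → ℝ) : Prop :=
  MemDTup T Y ∧ ∀ u ∈ Icc (0:ℝ) 1, ∀ t ∈ Icc (0:ℝ) T, Y u t = piMap X F Y u t

end

/-!
Write `S f u = sup_{t ≤ T} |f_u(t)|` and `K_G` for the integral operator of the kernel `|G|`.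
Since `x ↦ sup_{s ≤ t} max(x_s, 0)` is 1-Lipschitz for the sup norm, the fixed-point equation
gives `S Y ≤ S X + K_F (S Y)` for `Y = Ψ_F(X)`, and
`S (Y₁ - Y₂) ≤ K_{F₁-F₂} (S Y₂) + K_{F₁} (S (Y₁ - Y₂))`.
Iterating `φ ≤ ψ + K_F φ` `k` times and integrating over `[0, 1]`, the column bounds
`‖F‖_op ≤ 1` and `‖F^(k)‖_op ≤ γ` give `∫ φ ≤ k ∫ ψ + γ ∫ φ`, so `∫ φ ≤ k / (1 - γ) ∫ ψ` when
`∫ φ < ∞`. The first inequality thus yields `‖Y₂‖ ≤ k₂ / (1 - γ₂) ‖X‖`, and the second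
`‖Y₁ - Y₂‖ ≤ k₁ / (1 - γ₁) ‖F₁ - F₂‖_op ‖Y₂‖`.
-/

section Supremum

variable {ι : Sort*}

lemma abs_ciSup_sub_ciSup_le [Nonempty ι] {f g : ι → ℝ}
    (hd : BddAbove (range fun i => |f i - g i|)) :
    |(⨆ i, f i) - ⨆ i, g i| ≤ ⨆ i, |f i - g i| := by
  have hfg : ∀ i, f i ≤ g i + |f i - g i| := fun i => by linarith [le_abs_self (f i - g i)]
  have hgf : ∀ i, g i ≤ f i + |f i - g i| := fun i => by linarith [neg_abs_le (f i - g i)]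
  have bdd : ∀ {a b : ι → ℝ}, BddAbove (range b) → (∀ i, a i ≤ b i + |f i - g i|) →
      BddAbove (range a) := fun ⟨B, hB⟩ hab => ⟨B + ⨆ i, |f i - g i|,
        forall_mem_range.2 fun i => (hab i).trans (add_le_add (hB ⟨i, rfl⟩) (le_ciSup hd i))⟩
  have sup_le : ∀ {a b : ι → ℝ}, BddAbove (range b) → (∀ i, a i ≤ b i + |f i - g i|) →
      ⨆ i, a i ≤ (⨆ i, b i) + ⨆ i, |f i - g i| := fun hb hab =>
    ciSup_le fun i => (hab i).trans (add_le_add (le_ciSup hb i) (le_ciSup hd i))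
  by_cases hg : BddAbove (range g)
  · have hf := bdd hg hfg
    exact abs_sub_le_iff.2 ⟨by linarith [sup_le hg hfg], by linarith [sup_le hf hgf]⟩
  · have hf : ¬BddAbove (range f) := fun hf => hg (bdd hf hgf)
    rw [Real.iSup_of_not_bddAbove hf, Real.iSup_of_not_bddAbove hg, sub_zero, abs_zero]
    exact Real.iSup_nonneg fun i => abs_nonneg _

lemma iSup_ofReal_eq_top {g : ι → ℝ} (h : ¬BddAbove (range g)) :
    ⨆ i, ENNReal.ofReal (g i) = ⊤ := by
  refine iSup_eq_top.2 fun b hb => ?_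
  obtain ⟨_, ⟨i, rfl⟩, hi⟩ := not_bddAbove_iff.1 h b.toReal
  exact ⟨i, (ENNReal.lt_ofReal_iff_toReal_lt hb.ne).2 hi⟩

/-- No boundedness hypothesis: if `f - g` is unbounded the right-hand side is `⊤`. -/
lemma ofReal_abs_ciSup_sub_ciSup_le [Nonempty ι] (f g : ι → ℝ) :
    ENNReal.ofReal |(⨆ i, f i) - ⨆ i, g i| ≤ ⨆ i, ENNReal.ofReal |f i - g i| := by
  by_cases hd : BddAbove (range fun i => |f i - g i|)
  · rw [← Monotone.map_ciSup_of_continuousAt ENNReal.continuous_ofReal.continuousAt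
      ENNReal.ofReal_mono hd]
    exact ENNReal.ofReal_le_ofReal (abs_ciSup_sub_ciSup_le hd)
  · rw [iSup_ofReal_eq_top hd]
    exact le_top

end Supremum

lemma ENNReal.le_inv_mul_of_le_add_mul {a b c : ℝ≥0∞} (ha : a ≠ ⊤) (hc : c < 1)
    (h : a ≤ b + c * a) : a ≤ (1 - c)⁻¹ * b := by
  have hsub : (1 - c) * a ≤ b := by
    rw [ENNReal.sub_mul fun _ _ => ha, one_mul]
    exact tsub_le_iff_right.2 h
  exact (ENNReal.mul_le_iff_le_inv (tsub_pos_of_lt hc).ne' (tsub_le_self.trans_lt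
    ENNReal.one_lt_top).ne).1 hsub

lemma enorm_integral_sub_integral_le {α E : Type*} [MeasurableSpace α] {μ : Measure α}
    [NormedAddCommGroup E] [NormedSpace ℝ E] {f g : α → E}
    (hfg : AEStronglyMeasurable (fun x => f x - g x) μ) :
    ‖(∫ x, f x ∂μ) - ∫ x, g x ∂μ‖ₑ ≤ ∫⁻ x, ‖f x - g x‖ₑ ∂μ := by
  by_cases hint : Integrable (fun x => f x - g x) μ
  · by_cases hf : Integrable f μ
    · have hg : Integrable g μ := (hf.sub hint).congr (ae_of_all _ fun x => sub_sub_cancel _ _)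
      rw [← integral_sub hf hg]
      exact enorm_integral_le_lintegral_enorm _
    · have hg : ¬Integrable g μ := fun hg =>
        hf ((hint.add hg).congr (ae_of_all _ fun x => sub_add_cancel _ _))
      simp [integral_undef hf, integral_undef hg]
  · rw [Integrable, not_and_or, or_iff_right (not_not.2 hfg), HasFiniteIntegral, not_lt,
      top_le_iff] at hint
    rw [hint]
    exact le_top

section KernelOperator

variable {α : Type*} [MeasurableSpace α] (μ : Measure α)

noncomputable def kernelOp (κ : α → α → ℝ≥0∞) (φ : α → ℝ≥0∞) (u : α) : ℝ≥0∞ :=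
  ∫⁻ v, κ u v * φ v ∂μ

/-- Indexed like `kernelIter`: `kernelPow μ κ n` is the `(n+1)`-fold composite of `κ`. -/
noncomputable def kernelPow (κ : α → α → ℝ≥0∞) : ℕ → α → α → ℝ≥0∞
  | 0 => κ
  | n + 1 => fun u v => kernelOp μ κ (fun w => kernelPow κ n w v) u

variable {μ} {κ : α → α → ℝ≥0∞} {φ ψ : α → ℝ≥0∞}

lemma kernelOp_congr_ae (h : φ =ᵐ[μ] ψ) : kernelOp μ κ φ = kernelOp μ κ ψ :=
  funext fun _ => lintegral_congr_ae (h.mono fun _ hv => by simp only [hv])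

lemma kernelOp_mono_ae (h : φ ≤ᵐ[μ] ψ) : kernelOp μ κ φ ≤ kernelOp μ κ ψ :=
  fun _ => lintegral_mono_ae (h.mono fun _ hv => mul_le_mul_right hv _)

lemma kernelOp_iterate_mono_ae (h : φ ≤ᵐ[μ] ψ) (m : ℕ) :
    (kernelOp μ κ)^[m] φ ≤ᵐ[μ] (kernelOp μ κ)^[m] ψ := by
  induction m with
  | zero => exact h
  | succ m ih =>
    simp only [Function.iterate_succ_apply']
    exact Eventually.of_forall (kernelOp_mono_ae ih)

lemma kernelOp_add (hκ : Measurable (Function.uncurry κ)) (hφ : Measurable φ)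
    (ψ : α → ℝ≥0∞) : kernelOp μ κ (φ + ψ) = kernelOp μ κ φ + kernelOp μ κ ψ := by
  funext u
  simp only [kernelOp, Pi.add_apply, mul_add]
  exact lintegral_add_left ((hκ.comp measurable_prodMk_left).mul hφ) _

variable [SFinite μ]

lemma measurable_kernelOp (hκ : Measurable (Function.uncurry κ)) (hφ : AEMeasurable φ μ) :
    Measurable (kernelOp μ κ φ) := by
  obtain ⟨φ', hφ'm, hφe⟩ := hφ
  rw [kernelOp_congr_ae hφe]
  exact (hκ.mul (hφ'm.comp measurable_snd)).lintegral_prod_right'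

lemma measurable_kernelOp_iterate (hκ : Measurable (Function.uncurry κ)) (hφ : Measurable φ)
    (m : ℕ) : Measurable ((kernelOp μ κ)^[m] φ) := by
  induction m with
  | zero => exact hφ
  | succ m ih => rw [Function.iterate_succ_apply']; exact measurable_kernelOp hκ ih.aemeasurable

lemma measurable_kernelPow (hκ : Measurable (Function.uncurry κ)) (n : ℕ) :
    Measurable (Function.uncurry (kernelPow μ κ n)) := by
  induction n with
  | zero => exact hκ
  | succ n ih =>
    exact ((hκ.comp (measurable_fst.fst.prodMk measurable_snd)).mul
      (ih.comp (measurable_snd.prodMk measurable_fst.snd))).lintegral_prod_right'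

lemma kernelOp_iterate_add (hκ : Measurable (Function.uncurry κ)) (m : ℕ) (hφ : Measurable φ)
    (ψ : α → ℝ≥0∞) :
    (kernelOp μ κ)^[m] (φ + ψ) = (kernelOp μ κ)^[m] φ + (kernelOp μ κ)^[m] ψ := by
  induction m generalizing φ ψ with
  | zero => rfl
  | succ m ih =>
    simp only [Function.iterate_succ_apply]
    rw [kernelOp_add hκ hφ, ih (measurable_kernelOp hκ hφ.aemeasurable)]

lemma kernelOp_kernelOp {ρ : α → α → ℝ≥0∞} (hκ : Measurable (Function.uncurry κ))
    (hρ : Measurable (Function.uncurry ρ)) (hφ : Measurable φ) :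
    kernelOp μ κ (kernelOp μ ρ φ)
      = kernelOp μ (fun u v => kernelOp μ κ (fun w => ρ w v) u) φ := by
  funext u
  simp only [kernelOp]
  have hκu : Measurable (κ u) := hκ.comp measurable_prodMk_left
  calc ∫⁻ w, κ u w * ∫⁻ v, ρ w v * φ v ∂μ ∂μ
      = ∫⁻ w, ∫⁻ v, κ u w * (ρ w v * φ v) ∂μ ∂μ := lintegral_congr fun w =>
        (lintegral_const_mul _ ((hρ.comp measurable_prodMk_left).mul hφ)).symm
    _ = ∫⁻ v, ∫⁻ w, κ u w * (ρ w v * φ v) ∂μ ∂μ := lintegral_lintegral_swap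
        ((hκu.comp measurable_fst).mul (hρ.mul (hφ.comp measurable_snd))).aemeasurable
    _ = ∫⁻ v, (∫⁻ w, κ u w * ρ w v ∂μ) * φ v ∂μ := lintegral_congr fun v => by
        simp_rw [← mul_assoc]
        exact lintegral_mul_const _ (hκu.mul (hρ.comp measurable_prodMk_right))

lemma kernelOp_iterate_succ (hκ : Measurable (Function.uncurry κ)) (hφ : Measurable φ)
    (n : ℕ) : (kernelOp μ κ)^[n + 1] φ = kernelOp μ (kernelPow μ κ n) φ := by
  induction n with
  | zero => rfl
  | succ n ih =>
    rw [Function.iterate_succ_apply', ih, kernelOp_kernelOp hκ (measurable_kernelPow hκ n) hφ]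
    rfl

lemma lintegral_kernelOp_le {a : ℝ≥0∞} (hκ : Measurable (Function.uncurry κ))
    (hφ : AEMeasurable φ μ) (hcol : ∀ᵐ v ∂μ, ∫⁻ u, κ u v ∂μ ≤ a) :
    ∫⁻ u, kernelOp μ κ φ u ∂μ ≤ a * ∫⁻ v, φ v ∂μ := by
  obtain ⟨φ', hφ, hφe⟩ := hφ
  rw [kernelOp_congr_ae hφe, lintegral_congr_ae hφe]
  simp only [kernelOp]
  rw [lintegral_lintegral_swap (hκ.mul (hφ.comp measurable_snd)).aemeasurable,
    ← lintegral_const_mul _ hφ]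
  refine lintegral_mono_ae (hcol.mono fun v hv => ?_)
  have hκv : Measurable fun u => κ u v := hκ.comp measurable_prodMk_right
  rw [lintegral_mul_const _ hκv]
  exact mul_le_mul_left hv _

lemma lintegral_kernelOp_iterate_le (hκ : Measurable (Function.uncurry κ)) (hφ : Measurable φ)
    (hcol : ∀ᵐ v ∂μ, ∫⁻ u, κ u v ∂μ ≤ 1) (m : ℕ) :
    ∫⁻ u, (kernelOp μ κ)^[m] φ u ∂μ ≤ ∫⁻ u, φ u ∂μ := by
  induction m with
  | zero => exact le_rfl
  | succ m ih =>
    rw [Function.iterate_succ_apply']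
    exact (lintegral_kernelOp_le hκ (measurable_kernelOp_iterate hκ hφ m).aemeasurable hcol).trans
      (by rwa [one_mul])

lemma ae_lintegral_kernelPow_le {a : ℝ≥0∞} (hκ : Measurable (Function.uncurry κ))
    (hcol : ∀ᵐ v ∂μ, ∫⁻ u, κ u v ∂μ ≤ a) (n : ℕ) :
    ∀ᵐ v ∂μ, ∫⁻ u, kernelPow μ κ n u v ∂μ ≤ a ^ (n + 1) := by
  induction n with
  | zero => simpa [kernelPow] using hcol
  | succ n ih =>
    filter_upwards [ih] with v hv
    calc ∫⁻ u, kernelOp μ κ (fun w => kernelPow μ κ n w v) u ∂μ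
        ≤ a * ∫⁻ w, kernelPow μ κ n w v ∂μ :=
          lintegral_kernelOp_le hκ
            ((measurable_kernelPow hκ n).comp measurable_prodMk_right).aemeasurable hcol
      _ ≤ a ^ (n + 2) := by rw [pow_succ' a (n + 1)]; gcongr

lemma lintegral_le_mul_add_lintegral_kernelOp_iterate (hκ : Measurable (Function.uncurry κ))
    (hcol : ∀ᵐ v ∂μ, ∫⁻ u, κ u v ∂μ ≤ 1) (hψ : Measurable ψ)
    (hrec : φ ≤ᵐ[μ] ψ + kernelOp μ κ φ) (m : ℕ) :
    ∫⁻ u, φ u ∂μ ≤ m * ∫⁻ u, ψ u ∂μ + ∫⁻ u, (kernelOp μ κ)^[m] φ u ∂μ := by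
  induction m with
  | zero => simp
  | succ m ih =>
    have step : ∫⁻ u, (kernelOp μ κ)^[m] φ u ∂μ
        ≤ ∫⁻ u, ψ u ∂μ + ∫⁻ u, (kernelOp μ κ)^[m + 1] φ u ∂μ :=
      calc ∫⁻ u, (kernelOp μ κ)^[m] φ u ∂μ
          ≤ ∫⁻ u, (kernelOp μ κ)^[m] (ψ + kernelOp μ κ φ) u ∂μ :=
            lintegral_mono_ae (kernelOp_iterate_mono_ae hrec m)
        _ = ∫⁻ u, (kernelOp μ κ)^[m] ψ u ∂μ + ∫⁻ u, (kernelOp μ κ)^[m + 1] φ u ∂μ := by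
            rw [kernelOp_iterate_add hκ m hψ, Function.iterate_succ_apply]
            exact lintegral_add_left (measurable_kernelOp_iterate hκ hψ m) _
        _ ≤ _ := add_le_add_left (lintegral_kernelOp_iterate_le hκ hψ hcol m) _
    calc ∫⁻ u, φ u ∂μ ≤ m * ∫⁻ u, ψ u ∂μ + ∫⁻ u, (kernelOp μ κ)^[m] φ u ∂μ := ih
      _ ≤ m * ∫⁻ u, ψ u ∂μ + (∫⁻ u, ψ u ∂μ + ∫⁻ u, (kernelOp μ κ)^[m + 1] φ u ∂μ) := by
          gcongr
      _ = _ := by push_cast; ring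

/-- Iterate `φ ≤ ψ + Kφ` `n + 1` times: the remainder `K^(n+1) φ` has integral at most
`c ∫ φ`, which is absorbed on the left since `∫ φ < ∞`. -/
lemma lintegral_le_of_le_add_kernelOp {c : ℝ≥0∞} {n : ℕ} (hκ : Measurable (Function.uncurry κ))
    (hcol : ∀ᵐ v ∂μ, ∫⁻ u, κ u v ∂μ ≤ 1) (hpow : ∀ᵐ v ∂μ, ∫⁻ u, kernelPow μ κ n u v ∂μ ≤ c)
    (hc : c < 1) (hφ : AEMeasurable φ μ) (hψ : AEMeasurable ψ μ) (hfin : ∫⁻ u, φ u ∂μ ≠ ⊤)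
    (hrec : φ ≤ᵐ[μ] ψ + kernelOp μ κ φ) :
    ∫⁻ u, φ u ∂μ ≤ (1 - c)⁻¹ * ((n + 1 : ℕ) * ∫⁻ u, ψ u ∂μ) := by
  obtain ⟨φ', hφ, hφe⟩ := hφ
  obtain ⟨ψ', hψ, hψe⟩ := hψ
  rw [lintegral_congr_ae hφe] at hfin ⊢
  rw [lintegral_congr_ae hψe]
  replace hrec : φ' ≤ᵐ[μ] ψ' + kernelOp μ κ φ' := by
    filter_upwards [hrec, hφe, hψe] with u hu hφu hψu
    rwa [Pi.add_apply, ← hφu, ← hψu, ← kernelOp_congr_ae hφe]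
  refine ENNReal.le_inv_mul_of_le_add_mul hfin hc ?_
  calc ∫⁻ u, φ' u ∂μ
      ≤ (n + 1 : ℕ) * ∫⁻ u, ψ' u ∂μ + ∫⁻ u, (kernelOp μ κ)^[n + 1] φ' u ∂μ :=
        lintegral_le_mul_add_lintegral_kernelOp_iterate hκ hcol hψ hrec (n + 1)
    _ ≤ (n + 1 : ℕ) * ∫⁻ u, ψ' u ∂μ + c * ∫⁻ u, φ' u ∂μ := by
        rw [kernelOp_iterate_succ hκ hφ]
        gcongr
        exact lintegral_kernelOp_le (measurable_kernelPow hκ n) hφ.aemeasurable hpow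

end KernelOperator

local notation "μI" => volume.restrict (Icc (0:ℝ) 1)

section ReflectionKernel

noncomputable def absKernel (F : ℝ → ℝ → ℝ) (u v : ℝ) : ℝ≥0∞ := ENNReal.ofReal |F u v|

variable {F : ℝ → ℝ → ℝ}

lemma measurable_absKernel (hF : Measurable (Function.uncurry F)) :
    Measurable (Function.uncurry (absKernel F)) :=
  hF.abs.ennreal_ofReal

lemma ae_lintegral_absKernel_le_kernelOpNorm (F : ℝ → ℝ → ℝ) :
    ∀ᵐ v ∂μI, ∫⁻ u in Icc (0:ℝ) 1, absKernel F u v ≤ kernelOpNorm F :=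
  ae_restrict_of_forall_mem measurableSet_Icc fun v hv =>
    le_iSup₂ (f := fun v (_ : v ∈ Icc (0:ℝ) 1) =>
      ∫⁻ u in Icc (0:ℝ) 1, ENNReal.ofReal |F u v|) v hv

lemma measurable_kernelIter (hF : Measurable (Function.uncurry F)) (n : ℕ) :
    Measurable (Function.uncurry (kernelIter F n)) := by
  induction n with
  | zero => exact hF
  | succ n ih =>
    exact ((hF.comp (measurable_fst.fst.prodMk measurable_snd)).mul
      (ih.comp (measurable_snd.prodMk measurable_fst.snd))).stronglyMeasurable
      |>.integral_prod_right'.measurable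

lemma kernelIter_nonneg (hF : ∀ u ∈ Icc (0:ℝ) 1, ∀ v ∈ Icc (0:ℝ) 1, 0 ≤ F u v) (n : ℕ) :
    ∀ u ∈ Icc (0:ℝ) 1, ∀ v ∈ Icc (0:ℝ) 1, 0 ≤ kernelIter F n u v := by
  induction n with
  | zero => exact hF
  | succ n ih =>
    exact fun u hu v hv => setIntegral_nonneg measurableSet_Icc fun w hw =>
      mul_nonneg (hF u hu w hw) (ih w hw v hv)

/-- The Bochner integrals in `kernelIter` are integrable, hence equal to the lower integrals in
`kernelPow`, because the column bound makes the latter finite almost everywhere. -/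
lemma kernelPow_absKernel_ae_eq (hFm : Measurable (Function.uncurry F))
    (hF : ∀ u ∈ Icc (0:ℝ) 1, ∀ v ∈ Icc (0:ℝ) 1, 0 ≤ F u v) (hop : kernelOpNorm F ≤ 1) (n : ℕ) :
    ∀ᵐ v ∂μI, (fun u => kernelPow μI (absKernel F) n u v)
      =ᵐ[μI] fun u => absKernel (kernelIter F n) u v := by
  induction n with
  | zero => exact Eventually.of_forall fun v => EventuallyEq.rfl
  | succ n ih =>
    have hcol := (ae_lintegral_absKernel_le_kernelOpNorm F).mono fun v hv => hv.trans hop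
    filter_upwards [ih, ae_restrict_mem measurableSet_Icc,
      ae_lintegral_kernelPow_le (measurable_absKernel hFm) hcol (n + 1)] with v hv hvI hfin
    have hmeas : Measurable fun u => kernelPow μI (absKernel F) (n + 1) u v :=
      (measurable_kernelPow (measurable_absKernel hFm) (n + 1)).comp measurable_prodMk_right
    filter_upwards [ae_restrict_mem measurableSet_Icc,
      ae_lt_top hmeas (hfin.trans_lt (by simp)).ne] with u huI hu
    have hnn : ∀ w ∈ Icc (0:ℝ) 1, 0 ≤ F u w * kernelIter F n w v := fun w hw =>
      mul_nonneg (hF u huI w hw) (kernelIter_nonneg hF n w hw v hvI)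
    have hlin : kernelPow μI (absKernel F) (n + 1) u v
        = ∫⁻ w in Icc (0:ℝ) 1, ENNReal.ofReal (F u w * kernelIter F n w v) := by
      refine lintegral_congr_ae ?_
      filter_upwards [hv, ae_restrict_mem measurableSet_Icc] with w hw hwI
      rw [hw, absKernel, absKernel, ← ENNReal.ofReal_mul (abs_nonneg _), ← abs_mul,
        abs_of_nonneg (hnn w hwI)]
    have hint : kernelIter F (n + 1) u v
        = (∫⁻ w in Icc (0:ℝ) 1, ENNReal.ofReal (F u w * kernelIter F n w v)).toReal :=
      integral_eq_lintegral_of_nonneg_ae (ae_restrict_of_forall_mem measurableSet_Icc hnn)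
        ((hFm.comp measurable_prodMk_left).mul
          ((measurable_kernelIter hFm n).comp measurable_prodMk_right)).aestronglyMeasurable
    rw [absKernel, abs_of_nonneg (kernelIter_nonneg hF (n + 1) u huI v hvI), hint,
      ENNReal.ofReal_toReal (hlin ▸ hu.ne), hlin]

lemma IsReflKernel.ae_lintegral_kernelPow_le {γ : ℝ} {k : ℕ} (hF : IsReflKernel F γ k) :
    ∀ᵐ v ∂μI, ∫⁻ u in Icc (0:ℝ) 1, kernelPow μI (absKernel F) (k - 1) u v
      ≤ ENNReal.ofReal γ := by
  filter_upwards [kernelPow_absKernel_ae_eq hF.meas hF.nonneg hF.opNorm_le_one (k - 1),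
    ae_lintegral_absKernel_le_kernelOpNorm (kernelIter F (k - 1))] with v hv hcol
  rw [lintegral_congr_ae hv]
  exact hcol.trans hF.iter_le

lemma IsReflKernel.lintegral_le {γ : ℝ} {k : ℕ} (hF : IsReflKernel F γ k) {φ ψ : ℝ → ℝ≥0∞}
    (hφ : AEMeasurable φ μI) (hψ : AEMeasurable ψ μI) (hfin : ∫⁻ u in Icc (0:ℝ) 1, φ u ≠ ⊤)
    (hrec : ∀ u ∈ Icc (0:ℝ) 1, φ u ≤ ψ u + kernelOp μI (absKernel F) φ u) :
    ∫⁻ u in Icc (0:ℝ) 1, φ u ≤ ENNReal.ofReal (k / (1 - γ)) * ∫⁻ u in Icc (0:ℝ) 1, ψ u := by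
  obtain ⟨n, rfl⟩ : ∃ n, k = n + 1 := ⟨k - 1, (Nat.sub_add_cancel hF.k_pos).symm⟩
  have hcol := (ae_lintegral_absKernel_le_kernelOpNorm F).mono fun v hv =>
    hv.trans hF.opNorm_le_one
  have h := lintegral_le_of_le_add_kernelOp (measurable_absKernel hF.meas) hcol
    hF.ae_lintegral_kernelPow_le (ENNReal.ofReal_lt_one.2 hF.gamma_mem.2) hφ hψ hfin
    (ae_restrict_of_forall_mem measurableSet_Icc hrec)
  have hγ : 0 < 1 - γ := sub_pos.2 hF.gamma_mem.2
  rwa [ENNReal.ofReal_div_of_pos hγ, ENNReal.ofReal_sub _ hF.gamma_mem.1.le, ENNReal.ofReal_one,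
    ENNReal.ofReal_natCast, div_eq_mul_inv, mul_comm _ (1 - _)⁻¹, mul_assoc]

end ReflectionKernel

section PathSupremum

variable {T : ℝ} {f g : ℝ → ℝ → ℝ}

lemma ofReal_abs_le_pathSup {u s : ℝ} (hs : s ∈ Icc (0:ℝ) T) :
    ENNReal.ofReal |f u s| ≤ pathSup T f u :=
  le_iSup₂ (f := fun t (_ : t ∈ Icc (0:ℝ) T) => ENNReal.ofReal |f u t|) s hs

lemma ofReal_abs_mul_le_mul_pathSup {a u s : ℝ} (hs : s ∈ Icc (0:ℝ) T) :
    ENNReal.ofReal |a * f u s| ≤ ENNReal.ofReal |a| * pathSup T f u := by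
  rw [abs_mul, ENNReal.ofReal_mul (abs_nonneg a)]
  exact mul_le_mul_right (ofReal_abs_le_pathSup hs) _

/-- By right-continuity, on `[0, 1]` the supremum over `[0, T]` is one over the countable set
of rational times and `T`. -/
lemma aemeasurable_pathSup
    (hrc : ∀ u ∈ Icc (0:ℝ) 1, ∀ t ∈ Ico (0:ℝ) T, ContinuousWithinAt (f u) (Ici t) t)
    (hm : ∀ t ∈ Icc (0:ℝ) T, Measurable fun u => f u t) :
    AEMeasurable (pathSup T f) μI := by
  set D := Icc (0:ℝ) T ∩ (range ((↑) : ℚ → ℝ) ∪ {T})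
  have hD : D.Countable :=
    ((countable_range _).union (countable_singleton T)).mono inter_subset_right
  refine (Measurable.biSup D hD fun t ht => (hm t ht.1).abs.ennreal_ofReal).aemeasurable.congr
    (ae_restrict_of_forall_mem measurableSet_Icc fun u hu => ?_)
  refine le_antisymm (biSup_mono fun t ht => ht.1) (iSup₂_le fun t ht => ?_)
  have hD_le : ∀ y ∈ D, ENNReal.ofReal |f u y| ≤ ⨆ t ∈ D, ENNReal.ofReal |f u t| :=
    fun y hy => le_iSup₂ (f := fun t (_ : t ∈ D) => ENNReal.ofReal |f u t|) y hy
  rcases ht.2.eq_or_lt with rfl | htT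
  · exact hD_le t ⟨ht, Or.inr rfl⟩
  set s := Ioo t T ∩ range ((↑) : ℚ → ℝ)
  have hsD : s ⊆ D := fun y hy =>
    ⟨⟨ht.1.trans hy.1.1.le, hy.1.2.le⟩, Or.inl hy.2⟩
  have hts : t ∈ closure s := by
    have : closure (Ioo t T) ⊆ closure s := closure_minimal
      (Rat.denseRange_cast.open_subset_closure_inter isOpen_Ioo) isClosed_closure
    exact this (by rw [closure_Ioo htT.ne]; exact left_mem_Icc.2 htT.le)
  have hcont : ContinuousWithinAt (fun r => ENNReal.ofReal |f u r|) (Ici t) t :=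
    (ENNReal.continuous_ofReal.comp continuous_abs).continuousAt.comp_continuousWithinAt
      (hrc u hu t ⟨ht.1, htT⟩)
  exact ContinuousWithinAt.closure_le hts (hcont.mono fun y hy => hy.1.1.le)
    continuousWithinAt_const fun y hy => hD_le y (hsD hy)

lemma pathSup_sub_le (u : ℝ) :
    pathSup T (fun u t => f u t - g u t) u ≤ pathSup T f u + pathSup T g u :=
  iSup₂_le fun t ht => calc
    ENNReal.ofReal |f u t - g u t| ≤ ENNReal.ofReal |f u t| + ENNReal.ofReal |g u t| :=
      (ENNReal.ofReal_le_ofReal (abs_sub _ _)).trans ENNReal.ofReal_add_le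
    _ ≤ pathSup T f u + pathSup T g u :=
      add_le_add (ofReal_abs_le_pathSup ht) (ofReal_abs_le_pathSup ht)

lemma MemDT.aemeasurable_pathSup (hf : MemDT T f) : AEMeasurable (pathSup T f) μI :=
  _root_.aemeasurable_pathSup hf.rightCont hf.meas

lemma MemDT.sub (hf : MemDT T f) (hg : MemDT T g) : MemDT T (fun u t => f u t - g u t) where
  rightCont u hu t ht := (hf.rightCont u hu t ht).sub (hg.rightCont u hu t ht)
  leftLim u hu t ht := by
    obtain ⟨L, hL⟩ := hf.leftLim u hu t ht
    obtain ⟨M, hM⟩ := hg.leftLim u hu t ht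
    exact ⟨L - M, hL.sub hM⟩
  meas t ht := (hf.meas t ht).sub (hg.meas t ht)
  finite := by
    refine ne_top_of_le_ne_top (ENNReal.add_ne_top.2 ⟨hf.finite, hg.finite⟩) ?_
    calc TNorm T (fun u t => f u t - g u t)
        ≤ ∫⁻ u in Icc (0:ℝ) 1, (pathSup T f u + pathSup T g u) := lintegral_mono pathSup_sub_le
      _ = TNorm T f + TNorm T g := lintegral_add_left' hf.aemeasurable_pathSup _

end PathSupremum

section Regulator

variable {T : ℝ} {X : ℝ → ℝ → ℝ}

lemma ofReal_abs_piMap_sub_piMap_le {F₁ F₂ W₁ W₂ X₁ X₂ : ℝ → ℝ → ℝ} {u t : ℝ} (ht : 0 ≤ t) :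
    ENNReal.ofReal |piMap X₁ F₁ W₁ u t - piMap X₂ F₂ W₂ u t|
      ≤ ⨆ s : Icc (0:ℝ) t, ENNReal.ofReal
          |(-X₁ u s + kernelApply F₁ W₁ u s) - (-X₂ u s + kernelApply F₂ W₂ u s)| := by
  have : Nonempty (Icc (0:ℝ) t) := ⟨⟨0, le_rfl, ht⟩⟩
  exact (ofReal_abs_ciSup_sub_ciSup_le _ _).trans
    (iSup_mono fun _ => ENNReal.ofReal_le_ofReal (abs_max_sub_max_le_abs _ _ _))

lemma ofReal_abs_kernelApply_le {F W : ℝ → ℝ → ℝ} {s : ℝ} (hs : s ∈ Icc (0:ℝ) T) (u : ℝ) :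
    ENNReal.ofReal |kernelApply F W u s| ≤ kernelOp μI (absKernel F) (pathSup T W) u :=
  calc ENNReal.ofReal |kernelApply F W u s|
      ≤ ∫⁻ v in Icc (0:ℝ) 1, ENNReal.ofReal |F u v * W v s| := by
        simpa only [kernelApply, Real.enorm_eq_ofReal_abs] using
          enorm_integral_le_lintegral_enorm fun v => F u v * W v s
    _ ≤ _ := lintegral_mono fun _ => ofReal_abs_mul_le_mul_pathSup hs

lemma pathSup_le_add_kernelOp_of_eq_piMap {F Y : ℝ → ℝ → ℝ}
    (hY : ∀ u ∈ Icc (0:ℝ) 1, ∀ t ∈ Icc (0:ℝ) T, Y u t = piMap X F Y u t)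
    {u : ℝ} (hu : u ∈ Icc (0:ℝ) 1) :
    pathSup T Y u ≤ pathSup T X u + kernelOp μI (absKernel F) (pathSup T Y) u := by
  refine iSup₂_le fun t ht => ?_
  have hzero : ∀ r, kernelApply F (fun _ _ => 0) u r = 0 := fun r => by simp [kernelApply]
  have hpi : piMap (fun _ _ => 0) F (fun _ _ => 0) u t = 0 := by
    simp [piMap, hzero, Real.iSup_const_zero]
  have h := ofReal_abs_piMap_sub_piMap_le (X₂ := fun _ _ => 0) (F₂ := F) (W₂ := fun _ _ => 0)
    (X₁ := X) (F₁ := F) (W₁ := Y) (u := u) ht.1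
  simp only [hpi, hzero, neg_zero, add_zero, sub_zero] at h
  rw [hY u hu t ht]
  refine h.trans (iSup_le fun ⟨s, hs⟩ => ?_)
  have hsT : s ∈ Icc (0:ℝ) T := ⟨hs.1, hs.2.trans ht.2⟩
  calc ENNReal.ofReal |-X u s + kernelApply F Y u s|
      ≤ ENNReal.ofReal |X u s| + ENNReal.ofReal |kernelApply F Y u s| := by
        rw [← abs_neg (X u s)]
        exact (ENNReal.ofReal_le_ofReal (abs_add_le _ _)).trans ENNReal.ofReal_add_le
    _ ≤ _ := add_le_add (ofReal_abs_le_pathSup hsT) (ofReal_abs_kernelApply_le hsT u)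

lemma pathSup_sub_le_add_kernelOp_of_isRegulator {F₁ F₂ Y₁ Y₂ : ℝ → ℝ → ℝ}
    (hF₁ : Measurable (Function.uncurry F₁)) (hF₂ : Measurable (Function.uncurry F₂))
    (hY₁ : IsRegulator T X F₁ Y₁) (hY₂ : IsRegulator T X F₂ Y₂) {u : ℝ} (hu : u ∈ Icc (0:ℝ) 1) :
    pathSup T (fun u t => Y₁ u t - Y₂ u t) u
      ≤ kernelOp μI (absKernel fun u v => F₁ u v - F₂ u v) (pathSup T Y₂) u
        + kernelOp μI (absKernel F₁) (pathSup T fun u t => Y₁ u t - Y₂ u t) u := by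
  refine iSup₂_le fun t ht => ?_
  dsimp only
  rw [hY₁.2 u hu t ht, hY₂.2 u hu t ht]
  refine (ofReal_abs_piMap_sub_piMap_le ht.1).trans (iSup_le fun ⟨s, hs⟩ => ?_)
  have hsT : s ∈ Icc (0:ℝ) T := ⟨hs.1, hs.2.trans ht.2⟩
  have hκ : Measurable (Function.uncurry (absKernel fun u v => F₁ u v - F₂ u v)) :=
    measurable_absKernel (hF₁.sub hF₂)
  have hmeas : AEStronglyMeasurable (fun v => F₁ u v * Y₁ v s - F₂ u v * Y₂ v s) μI :=
    (((hF₁.comp measurable_prodMk_left).mul (hY₁.1.memDT.meas s hsT)).sub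
      ((hF₂.comp measurable_prodMk_left).mul (hY₂.1.memDT.meas s hsT))).aestronglyMeasurable
  rw [add_sub_add_left_eq_sub]
  calc ENNReal.ofReal |kernelApply F₁ Y₁ u s - kernelApply F₂ Y₂ u s|
      ≤ ∫⁻ v in Icc (0:ℝ) 1, ENNReal.ofReal |F₁ u v * Y₁ v s - F₂ u v * Y₂ v s| := by
        simpa only [kernelApply, Real.enorm_eq_ofReal_abs] using
          enorm_integral_sub_integral_le hmeas
    _ ≤ ∫⁻ v in Icc (0:ℝ) 1, (absKernel (fun u v => F₁ u v - F₂ u v) u v * pathSup T Y₂ v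
          + absKernel F₁ u v * pathSup T (fun u t => Y₁ u t - Y₂ u t) v) :=
        lintegral_mono fun v => calc
          ENNReal.ofReal |F₁ u v * Y₁ v s - F₂ u v * Y₂ v s|
              = ENNReal.ofReal |(F₁ u v - F₂ u v) * Y₂ v s + F₁ u v * (Y₁ v s - Y₂ v s)| := by
                ring_nf
            _ ≤ _ := (ENNReal.ofReal_le_ofReal (abs_add_le _ _)).trans ENNReal.ofReal_add_le
            _ ≤ _ := add_le_add (ofReal_abs_mul_le_mul_pathSup hsT)
                (ofReal_abs_mul_le_mul_pathSup (f := fun u t => Y₁ u t - Y₂ u t) hsT)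
    _ = _ := lintegral_add_left' ((hκ.comp measurable_prodMk_left).aemeasurable.mul
          hY₂.1.memDT.aemeasurable_pathSup) _

lemma TNorm_le_of_isRegulator {F Y : ℝ → ℝ → ℝ} {γ : ℝ} {k : ℕ} (hF : IsReflKernel F γ k)
    (hX : MemDT T X) (hY : IsRegulator T X F Y) :
    TNorm T Y ≤ ENNReal.ofReal (k / (1 - γ)) * TNorm T X :=
  hF.lintegral_le hY.1.memDT.aemeasurable_pathSup hX.aemeasurable_pathSup hY.1.memDT.finite
    fun _ hu => pathSup_le_add_kernelOp_of_eq_piMap hY.2 hu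

lemma TNorm_sub_le_of_isRegulator {F₁ F₂ Y₁ Y₂ : ℝ → ℝ → ℝ} {γ₁ : ℝ} {k₁ : ℕ}
    (hF₁ : IsReflKernel F₁ γ₁ k₁) (hF₂ : Measurable (Function.uncurry F₂))
    (hY₁ : IsRegulator T X F₁ Y₁) (hY₂ : IsRegulator T X F₂ Y₂) :
    TNorm T (fun u t => Y₁ u t - Y₂ u t)
      ≤ ENNReal.ofReal (k₁ / (1 - γ₁))
          * (kernelOpNorm (fun u v => F₁ u v - F₂ u v) * TNorm T Y₂) := by
  have hD := hY₁.1.memDT.sub hY₂.1.memDT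
  have hκ := measurable_absKernel (F := fun u v => F₁ u v - F₂ u v) (hF₁.meas.sub hF₂)
  calc TNorm T (fun u t => Y₁ u t - Y₂ u t)
      ≤ ENNReal.ofReal (k₁ / (1 - γ₁)) * ∫⁻ u in Icc (0:ℝ) 1,
          kernelOp μI (absKernel fun u v => F₁ u v - F₂ u v) (pathSup T Y₂) u :=
        hF₁.lintegral_le hD.aemeasurable_pathSup
          (measurable_kernelOp hκ hY₂.1.memDT.aemeasurable_pathSup).aemeasurable hD.finite
          fun _ hu => pathSup_sub_le_add_kernelOp_of_isRegulator hF₁.meas hF₂ hY₁ hY₂ hu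
    _ ≤ _ := by
        gcongr
        exact lintegral_kernelOp_le hκ hY₂.1.memDT.aemeasurable_pathSup
          (ae_lintegral_absKernel_le_kernelOpNorm _)

end Regulator

theorem regulator_kernel_lipschitz_general
    (T : ℝ) (F1 F2 : ℝ → ℝ → ℝ) (γ1 γ2 : ℝ) (k1 k2 : ℕ)
    (hF1 : IsReflKernel F1 γ1 k1) (hF2 : IsReflKernel F2 γ2 k2)
    (X Y1 Y2 : ℝ → ℝ → ℝ) (hX : MemDT T X)
    (hY1 : IsRegulator T X F1 Y1) (hY2 : IsRegulator T X F2 Y2) :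
    TNorm T (fun u t => Y1 u t - Y2 u t)
      ≤ ENNReal.ofReal ((k1 : ℝ) * k2 / ((1 - γ1) * (1 - γ2)))
          * kernelOpNorm (fun u v => F1 u v - F2 u v) * TNorm T X := by
  have hk1 : 0 ≤ (k1 : ℝ) / (1 - γ1) := div_nonneg k1.cast_nonneg (sub_nonneg.2 hF1.gamma_mem.2.le)
  calc TNorm T (fun u t => Y1 u t - Y2 u t)
      ≤ ENNReal.ofReal (k1 / (1 - γ1))
          * (kernelOpNorm (fun u v => F1 u v - F2 u v) * TNorm T Y2) :=
        TNorm_sub_le_of_isRegulator hF1 hF2.meas hY1 hY2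
    _ ≤ ENNReal.ofReal (k1 / (1 - γ1)) * (kernelOpNorm (fun u v => F1 u v - F2 u v)
          * (ENNReal.ofReal (k2 / (1 - γ2)) * TNorm T X)) := by
        gcongr
        exact TNorm_le_of_isRegulator hF2 hX hY2
    _ = _ := by
        rw [← div_mul_div_comm, ENNReal.ofReal_mul hk1]
        ring

/-- Lipschitz bound for the regulator in the reflection kernel:
`‖Ψ_{F₁}(X) − Ψ_{F₂}(X)‖_{T,1} ≤ k₁k₂ ‖F₁ − F₂‖_op ‖X‖_{T,1} / ((1−γ₁)(1−γ₂))`. -/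
theorem regulator_kernel_lipschitz
    (T : ℝ) (hT : 0 < T) (F1 F2 : ℝ → ℝ → ℝ) (γ1 γ2 : ℝ) (k1 k2 : ℕ)
    (hF1 : IsReflKernel F1 γ1 k1) (hF2 : IsReflKernel F2 γ2 k2)
    (X Y1 Y2 : ℝ → ℝ → ℝ) (hX : MemDT T X)
    (hY1 : IsRegulator T X F1 Y1) (hY2 : IsRegulator T X F2 Y2) :
    TNorm T (fun u t => Y1 u t - Y2 u t)
      ≤ ENNReal.ofReal ((k1 : ℝ) * k2 / ((1 - γ1) * (1 - γ2)))
          * kernelOpNorm (fun u v => F1 u v - F2 u v) * TNorm T X :=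
  regulator_kernel_lipschitz_general T F1 F2 γ1 γ2 k1 k2 hF1 hF2 X Y1 Y2 hX hY1 hY2
end

section
/- Let T > 0 and let {x^n}_{n∈ℕ} be a sequence in D_T^↑(L1) that is pointwise nondecreasing in n (x^n_u(t) ≤ x^{n+1}_u(t) for all n, u, t) and majorized by some y ∈ D_T^↑(L1) (x^n ≤ y for all n). Then the sequence has a supremum in D_T^↑(L1): there exists x ∈ D_T^↑(L1) such that x^n ≤ x for all n, and x ≤ z for every z ∈ D_T^↑(L1) satisfying x^n ≤ z for all n. -/
open MeasureTheory Set Filter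
open scoped ENNReal NNReal

/- The pointwise supremum of the sequence need not be right-continuous (the indicators of
`{t ≥ 1/(n+1)}` increase to that of `{t > 0}`), so the supremum in `D_T^↑(L1)` is its
right-limit regularization. That regularization is a Stieltjes function in `t`; in `u` it is the
infimum of countably many measurable suprema, and it lies below every right-continuous majorant. -/

open Topology Function

theorem TNorm_mono {T : ℝ} {f g : ℝ → ℝ → ℝ}
    (h : ∀ u ∈ Icc (0:ℝ) 1, ∀ t ∈ Icc (0:ℝ) T, |f u t| ≤ |g u t|) :
    TNorm T f ≤ TNorm T g :=
  setLIntegral_mono' measurableSet_Icc fun u hu =>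
    iSup₂_mono fun t ht => ENNReal.ofReal_le_ofReal (h u hu t ht)

theorem memDTup_of_monotone_of_le {T : ℝ} {y z : ℝ → ℝ → ℝ} (hy : MemDT T y)
    (hmono : ∀ u ∈ Icc (0:ℝ) 1, Monotone (z u))
    (hcont : ∀ u ∈ Icc (0:ℝ) 1, ∀ t, ContinuousWithinAt (z u) (Ici t) t)
    (hmeas : ∀ t ∈ Icc (0:ℝ) T, Measurable fun u => z u t)
    (hz₀ : ∀ u ∈ Icc (0:ℝ) 1, 0 ≤ z u 0)
    (hzy : ∀ u ∈ Icc (0:ℝ) 1, ∀ t ∈ Icc (0:ℝ) T, z u t ≤ y u t) : MemDTup T z where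
  memDT :=
    { rightCont := fun u hu t _ => hcont u hu t
      leftLim := fun u hu t _ => ⟨_, (hmono u hu).tendsto_nhdsLT t⟩
      meas := hmeas
      finite := ne_top_of_le_ne_top hy.finite <| TNorm_mono fun u hu t ht => by
        rw [abs_of_nonneg ((hz₀ u hu).trans (hmono u hu ht.1))]
        exact (hzy u hu t ht).trans (le_abs_self _) }
  nonneg_zero := hz₀
  mono := fun u hu => (hmono u hu).monotoneOn _

theorem Monotone.rightLim_le_of_eventually_le {g w : ℝ → ℝ} (hg : Monotone g) {t : ℝ}
    (hw : ContinuousWithinAt w (Ioi t) t) (hgw : ∀ᶠ s in 𝓝[>] t, g s ≤ w s) :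
    rightLim g t ≤ w t :=
  le_of_tendsto_of_tendsto (hg.tendsto_rightLim t) hw hgw

noncomputable def rightLimSeq (g : ℝ → ℝ) (t : ℝ) : ℝ :=
  ⨅ k : ℕ, g (t + 1 / ((k : ℝ) + 1))

theorem Monotone.rightLimSeq_eq_rightLim {g : ℝ → ℝ} (hg : Monotone g) :
    rightLimSeq g = rightLim g := by
  funext t
  have hseq : Tendsto (fun k : ℕ => t + 1 / ((k : ℝ) + 1)) atTop (𝓝[>] t) := by
    refine tendsto_nhdsWithin_iff.2 ⟨?_, Eventually.of_forall fun k => ?_⟩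
    · simpa using tendsto_const_nhds.add (tendsto_one_div_add_atTop_nhds_zero_nat (𝕜 := ℝ))
    · exact lt_add_of_pos_right t Nat.one_div_pos_of_nat
  have hanti : Antitone fun k : ℕ => g (t + 1 / ((k : ℝ) + 1)) := fun k l hkl =>
    hg <| add_le_add_right (Nat.one_div_le_one_div hkl) t
  have hbdd : BddBelow (range fun k : ℕ => g (t + 1 / ((k : ℝ) + 1))) :=
    ⟨g t, forall_mem_range.2 fun k => hg (le_add_of_nonneg_right Nat.one_div_pos_of_nat.le)⟩
  exact tendsto_nhds_unique (tendsto_atTop_ciInf hanti hbdd) ((hg.tendsto_rightLim t).comp hseq)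

theorem measurable_rightLimSeq {α : Type*} [MeasurableSpace α] {g : α → ℝ → ℝ}
    (hg : ∀ s, Measurable fun u => g u s) (t : ℝ) : Measurable fun u => rightLimSeq (g u) t :=
  Measurable.iInf fun _ => hg _

section iSupIccExtend

variable {a b : ℝ} (hab : a ≤ b) (f : ℕ → ℝ → ℝ)

noncomputable def iSupIccExtend : ℝ → ℝ :=
  IccExtend hab fun s => ⨆ n, f n s

variable {hab f}

theorem iSupIccExtend_of_mem {t : ℝ} (ht : t ∈ Icc a b) :
    iSupIccExtend hab f t = ⨆ n, f n t :=
  IccExtend_of_mem hab _ ht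

theorem monotone_iSupIccExtend (hf : ∀ n, MonotoneOn (f n) (Icc a b))
    (hbdd : ∀ s ∈ Icc a b, BddAbove (range fun n => f n s)) :
    Monotone (iSupIccExtend hab f) :=
  Monotone.IccExtend _ fun s s' hss' => ciSup_mono (hbdd s' s'.2) fun n => hf n s.2 s'.2 hss'

theorem le_rightLim_iSupIccExtend (hf : ∀ n, MonotoneOn (f n) (Icc a b))
    (hbdd : ∀ s ∈ Icc a b, BddAbove (range fun n => f n s)) (n : ℕ) {t : ℝ}
    (ht : t ∈ Icc a b) : f n t ≤ rightLim (iSupIccExtend hab f) t :=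
  calc f n t ≤ iSupIccExtend hab f t := by
        rw [iSupIccExtend_of_mem ht]; exact le_ciSup (hbdd t ht) n
    _ ≤ _ := (monotone_iSupIccExtend hf hbdd).le_rightLim le_rfl

theorem rightLim_iSupIccExtend_right :
    rightLim (iSupIccExtend hab f) b = iSupIccExtend hab f b := by
  refine rightLim_eq_of_tendsto (tendsto_const_nhds.congr' ?_)
  filter_upwards [self_mem_nhdsWithin] with s hs
  simp only [iSupIccExtend, IccExtend_of_right_le hab _ (le_of_lt hs), IccExtend_right]

theorem rightLim_iSupIccExtend_le (hf : ∀ n, MonotoneOn (f n) (Icc a b)) {w : ℝ → ℝ}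
    (hw : ∀ t ∈ Ico a b, ContinuousWithinAt w (Ici t) t)
    (hfw : ∀ n, ∀ s ∈ Icc a b, f n s ≤ w s) {t : ℝ} (ht : t ∈ Icc a b) :
    rightLim (iSupIccExtend hab f) t ≤ w t := by
  have hbdd : ∀ s ∈ Icc a b, BddAbove (range fun n => f n s) := fun s hs =>
    ⟨w s, forall_mem_range.2 fun n => hfw n s hs⟩
  have hgw : ∀ s ∈ Icc a b, iSupIccExtend hab f s ≤ w s := fun s hs => by
    rw [iSupIccExtend_of_mem hs]; exact ciSup_le fun n => hfw n s hs
  rcases ht.2.lt_or_eq with htb | rfl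
  · refine Monotone.rightLim_le_of_eventually_le (monotone_iSupIccExtend hf hbdd)
      ((hw t ⟨ht.1, htb⟩).mono Ioi_subset_Ici_self) ?_
    filter_upwards [Ioo_mem_nhdsGT htb] with s hs using hgw s ⟨ht.1.trans hs.1.le, hs.2.le⟩
  · rw [rightLim_iSupIccExtend_right]
    exact hgw _ ht

end iSupIccExtend

theorem monotone_majorized_sequence_has_sup_general
    (T : ℝ) (hT : 0 < T) (x : ℕ → ℝ → ℝ → ℝ) (y : ℝ → ℝ → ℝ)
    (hx : ∀ n, MemDTup T (x n)) (hy : MemDTup T y)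
    (hmaj : ∀ n : ℕ, ∀ u ∈ Icc (0:ℝ) 1, ∀ t ∈ Icc (0:ℝ) T, x n u t ≤ y u t) :
    ∃ z : ℝ → ℝ → ℝ, MemDTup T z ∧
      (∀ n : ℕ, ∀ u ∈ Icc (0:ℝ) 1, ∀ t ∈ Icc (0:ℝ) T, x n u t ≤ z u t) ∧
      (∀ w : ℝ → ℝ → ℝ, MemDTup T w →
        (∀ n : ℕ, ∀ u ∈ Icc (0:ℝ) 1, ∀ t ∈ Icc (0:ℝ) T, x n u t ≤ w u t) →
        ∀ u ∈ Icc (0:ℝ) 1, ∀ t ∈ Icc (0:ℝ) T, z u t ≤ w u t) := by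
  set g : ℝ → ℝ → ℝ := fun u => iSupIccExtend hT.le fun n => x n u
  have hxu (u) (hu : u ∈ Icc (0:ℝ) 1) (n : ℕ) := (hx n).mono u hu
  have hbdd (u) (hu : u ∈ Icc (0:ℝ) 1) (s) (hs : s ∈ Icc 0 T) :
      BddAbove (range fun n => x n u s) :=
    ⟨y u s, forall_mem_range.2 fun n => hmaj n u hu s hs⟩
  have hg (u) (hu : u ∈ Icc (0:ℝ) 1) : Monotone (g u) :=
    monotone_iSupIccExtend (hxu u hu) (hbdd u hu)
  have hz (u) (hu : u ∈ Icc (0:ℝ) 1) : rightLimSeq (g u) = rightLim (g u) :=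
    (hg u hu).rightLimSeq_eq_rightLim
  have hmeas (s) : Measurable fun u => g u s :=
    Measurable.iSup fun n => (hx n).memDT.meas _ (projIcc 0 T hT.le s).2
  have hupper : ∀ n : ℕ, ∀ u ∈ Icc (0:ℝ) 1, ∀ t ∈ Icc (0:ℝ) T,
      x n u t ≤ rightLimSeq (g u) t := fun n u hu t ht =>
    (hz u hu).symm ▸ le_rightLim_iSupIccExtend (hxu u hu) (hbdd u hu) n ht
  have hleast (w) (hw : MemDTup T w)
      (hxw : ∀ n : ℕ, ∀ u ∈ Icc (0:ℝ) 1, ∀ t ∈ Icc (0:ℝ) T, x n u t ≤ w u t) :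
      ∀ u ∈ Icc (0:ℝ) 1, ∀ t ∈ Icc (0:ℝ) T, rightLimSeq (g u) t ≤ w u t :=
    fun u hu t ht => (hz u hu).symm ▸
      rightLim_iSupIccExtend_le (hxu u hu) (hw.memDT.rightCont u hu) (hxw · u hu) ht
  refine ⟨fun u => rightLimSeq (g u), ?_, hupper, hleast⟩
  exact memDTup_of_monotone_of_le hy.memDT (fun u hu => hz u hu ▸ (hg u hu).rightLim)
    (fun u hu t => hz u hu ▸ continuousWithinAt_rightLim_Ici ((hg u hu).tendsto_rightLim t))
    (fun t _ => measurable_rightLimSeq hmeas t)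
    (fun u hu => ((hx 0).nonneg_zero u hu).trans (hupper 0 u hu 0 ⟨le_rfl, hT.le⟩))
    (hleast y hy hmaj)

/-- a pointwise nondecreasing sequence in `D_T^↑(L1)` majorized by an
element of `D_T^↑(L1)` has a supremum in `D_T^↑(L1)`. -/
theorem monotone_majorized_sequence_has_sup
    (T : ℝ) (hT : 0 < T) (x : ℕ → ℝ → ℝ → ℝ) (y : ℝ → ℝ → ℝ)
    (hx : ∀ n, MemDTup T (x n)) (hy : MemDTup T y)
    (hmono : ∀ n : ℕ, ∀ u ∈ Icc (0:ℝ) 1, ∀ t ∈ Icc (0:ℝ) T, x n u t ≤ x (n + 1) u t)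
    (hmaj : ∀ n : ℕ, ∀ u ∈ Icc (0:ℝ) 1, ∀ t ∈ Icc (0:ℝ) T, x n u t ≤ y u t) :
    ∃ z : ℝ → ℝ → ℝ, MemDTup T z ∧
      (∀ n : ℕ, ∀ u ∈ Icc (0:ℝ) 1, ∀ t ∈ Icc (0:ℝ) T, x n u t ≤ z u t) ∧
      (∀ w : ℝ → ℝ → ℝ, MemDTup T w →
        (∀ n : ℕ, ∀ u ∈ Icc (0:ℝ) 1, ∀ t ∈ Icc (0:ℝ) T, x n u t ≤ w u t) →
        ∀ u ∈ Icc (0:ℝ) 1, ∀ t ∈ Icc (0:ℝ) T, z u t ≤ w u t) :=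
  monotone_majorized_sequence_has_sup_general T hT x y hx hy hmaj
end

section
/- Let N ≥ 1, let K_1 = [0, 1/N] and K_i = ((i−1)/N, i/N] for 2 ≤ i ≤ N, and for an N×N real matrix A define its blockwise-constant kernel A^N(u,v) = Σ_{i=1}^N Σ_{j=1}^N A_{ij} 1_{K_i}(u) 1_{K_j}(v). Then: (a) for any N×N real matrices A and B, the composition kernel (u,v) ↦ ∫₀¹ B^N(u,w) A^N(w,v) dw equals the blockwise-constant kernel of the matrix (1/N) B A, for all u, v ∈ [0,1]; (b) consequently, for any N×N matrix G with G_{ij} ≥ 0, setting P := (1/N) G and letting (G^N)^T denote the kernel (u,v) ↦ G^N(v,u) with k-fold composition ((G^N)^T)^(k) (defined by F^(1) = F and F^(n+1)(u,v) = ∫₀¹ F(u,w) F^(n)(w,v) dw), one has ‖((G^N)^T)^(k)‖_op = max_{1 ≤ i ≤ N} Σ_{j=1}^N (P^k)_{ij} for every k ≥ 1, where ‖F‖_op = sup_{v ∈ [0,1]} ∫₀¹ |F(u,v)| du. -/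
open MeasureTheory Set Filter
open scoped ENNReal NNReal

noncomputable section

/-- The partition of `[0,1]`: `Kblock N 0 = [0, 1/N]`, and for `i ≥ 1` (0-based),
`Kblock N i = (i/N, (i+1)/N]` (corresponding to `K_{i+1} = (i/N, (i+1)/N]` in 1-based
indexing). -/
def Kblock (N : ℕ) (i : Fin N) : Set ℝ :=
  if (i : ℕ) = 0 then Icc (0:ℝ) (1 / (N : ℝ))
  else Ioc (((i : ℕ) : ℝ) / (N : ℝ)) ((((i : ℕ) : ℝ) + 1) / (N : ℝ))

/-- The blockwise-constant kernel associated with an `N×N` matrix. -/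
def blockKernel (N : ℕ) (G : Matrix (Fin N) (Fin N) ℝ) : ℝ → ℝ → ℝ :=
  fun u v => ∑ i : Fin N, ∑ j : Fin N,
    G i j * (Kblock N i).indicator (fun _ => (1:ℝ)) u
      * (Kblock N j).indicator (fun _ => (1:ℝ)) v

end

/-!
Each `Kblock N i` has length `1/N`, and distinct blocks are disjoint, so
`∫₀¹ 1_{K_j} 1_{K_p} = δ_{jp} / N`; expanding the composition of two block kernels bilinearly
gives (a). Iterating, the `k`-fold composition of the block kernel of `Gᵀ` is the block kernel
of `N^{1-k} (Gᵀ)^k`. For a nonnegative matrix `M` and `v ∈ K_j`, `∫₀¹ |M^N(u,v)| du` is the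
column sum `Σ_i M_ij / N`, while it vanishes for `v` in no block; since the right endpoint of
each block lies in `[0,1]`, the operator norm is the largest column sum. For
`M = N^{1-k} (Gᵀ)^k` these are the row sums of `P^k`.
-/

open Finset Function
open scoped Matrix

theorem ENNReal.ofReal_iSup_of_finite {ι : Type*} [Finite ι] (x : ι → ℝ) :
    ENNReal.ofReal (⨆ i, x i) = ⨆ i, ENNReal.ofReal (x i) := by
  cases isEmpty_or_nonempty ι
  · simp
  · exact ENNReal.ofReal_mono.map_ciSup_of_continuousAt ENNReal.continuous_ofReal.continuousAt
      (Set.finite_range x).bddAbove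

section Kblock

variable {N : ℕ}

theorem measurableSet_Kblock (i : Fin N) : MeasurableSet (Kblock N i) := by
  unfold Kblock
  split
  exacts [measurableSet_Icc, measurableSet_Ioc]

theorem Kblock_subset_Icc (i : Fin N) :
    Kblock N i ⊆ Icc (((i : ℕ) : ℝ) / N) ((((i : ℕ) : ℝ) + 1) / N) := by
  unfold Kblock
  split
  · simp_all
  · exact Ioc_subset_Icc_self

theorem Kblock_subset_unitInterval (i : Fin N) : Kblock N i ⊆ Icc (0 : ℝ) 1 := by
  have hN : (0 : ℝ) < N := by exact_mod_cast i.pos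
  have hi : ((i : ℕ) : ℝ) + 1 ≤ N := by exact_mod_cast i.isLt
  refine (Kblock_subset_Icc i).trans (Icc_subset_Icc (by positivity) ?_)
  rwa [div_le_one hN]

theorem right_mem_Kblock (i : Fin N) : (((i : ℕ) : ℝ) + 1) / N ∈ Kblock N i := by
  have hN : (0 : ℝ) < N := by exact_mod_cast i.pos
  unfold Kblock
  split
  · simp_all [hN.le]
  · exact ⟨by gcongr; linarith, le_rfl⟩

theorem measureReal_Kblock (i : Fin N) : volume.real (Kblock N i) = 1 / N := by
  have hN : (0 : ℝ) < N := by exact_mod_cast i.pos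
  unfold Kblock
  split
  · simp [measureReal_def, Real.volume_Icc, hN.le]
  · rw [measureReal_def, Real.volume_Ioc, add_div, add_sub_cancel_left,
      ENNReal.toReal_ofReal (by positivity)]

theorem pairwise_disjoint_Kblock : Pairwise (Disjoint on Kblock N) := by
  suffices ∀ i j : Fin N, (i : ℕ) < j → Disjoint (Kblock N i) (Kblock N j) by
    intro i j hij
    rcases Nat.lt_or_gt_of_ne (Fin.val_ne_of_ne hij) with h | h
    exacts [this i j h, (this j i h).symm]
  intro i j hij
  rw [Set.disjoint_left]
  intro x hxi hxj
  have hN : (0 : ℝ) < N := by exact_mod_cast i.pos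
  have hxj : ((j : ℕ) : ℝ) / N < x := by
    unfold Kblock at hxj
    rw [if_neg (by omega)] at hxj
    exact hxj.1
  have hij : ((i : ℕ) : ℝ) + 1 ≤ (j : ℕ) := by exact_mod_cast hij
  have : (((i : ℕ) : ℝ) + 1) / N ≤ ((j : ℕ) : ℝ) / N := by gcongr
  linarith [(Kblock_subset_Icc i hxi).2]

end Kblock

noncomputable def blockIndicator (N : ℕ) (i : Fin N) : ℝ → ℝ :=
  (Kblock N i).indicator 1

section blockIndicator

variable {N : ℕ}

theorem blockKernel_apply (M : Matrix (Fin N) (Fin N) ℝ) (u v : ℝ) :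
    blockKernel N M u v =
      ∑ i, ∑ j, M i j * blockIndicator N i u * blockIndicator N j v :=
  rfl

theorem blockIndicator_nonneg (i : Fin N) (u : ℝ) : 0 ≤ blockIndicator N i u :=
  indicator_nonneg (fun _ _ => zero_le_one) u

theorem blockIndicator_of_mem {j : Fin N} {v : ℝ} (hv : v ∈ Kblock N j) (i : Fin N) :
    blockIndicator N i v = if i = j then 1 else 0 := by
  split_ifs with h
  · subst h
    exact indicator_of_mem hv 1
  · exact indicator_of_notMem ((pairwise_disjoint_Kblock h).symm.notMem_of_mem_left hv) 1

theorem blockIndicator_mul (i j : Fin N) (w : ℝ) :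
    blockIndicator N i w * blockIndicator N j w = if i = j then blockIndicator N i w else 0 := by
  unfold blockIndicator
  rw [← Pi.mul_apply, ← inter_indicator_one]
  split_ifs with h
  · rw [h, inter_self]
  · rw [(pairwise_disjoint_Kblock h).inter_eq, indicator_empty]

theorem integrable_blockIndicator (i : Fin N) :
    Integrable (blockIndicator N i) (volume.restrict (Icc 0 1)) :=
  (integrable_const 1).indicator (measurableSet_Kblock i)

theorem integral_blockIndicator (i : Fin N) :
    ∫ u in Icc (0 : ℝ) 1, blockIndicator N i u = 1 / N := by
  rw [blockIndicator, integral_indicator_one (measurableSet_Kblock i), measureReal_restrict_apply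
    (measurableSet_Kblock i), inter_eq_left.mpr (Kblock_subset_unitInterval i), measureReal_Kblock]

theorem integral_blockIndicator_mul (i j : Fin N) :
    ∫ w in Icc (0 : ℝ) 1, blockIndicator N i w * blockIndicator N j w =
      if i = j then 1 / (N : ℝ) else 0 := by
  simp_rw [blockIndicator_mul]
  split_ifs
  exacts [integral_blockIndicator i, integral_zero _ _]

end blockIndicator

section blockKernel

variable {N : ℕ}

theorem kernelComp_blockKernel (A B : Matrix (Fin N) (Fin N) ℝ) :
    kernelComp (blockKernel N B) (blockKernel N A) = blockKernel N ((1 / (N : ℝ)) • (B * A)) := by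
  ext u v
  set col : Fin N → ℝ := fun j => ∑ i, B i j * blockIndicator N i u
  set row : Fin N → ℝ := fun j => ∑ q, A j q * blockIndicator N q v
  have hprod : ∀ w, blockKernel N B u w * blockKernel N A w v =
      ∑ j, ∑ p, col j * row p * (blockIndicator N j w * blockIndicator N p w) := fun w => by
    have hB : blockKernel N B u w = ∑ j, col j * blockIndicator N j w := by
      simp only [blockKernel_apply, col, sum_mul]
      exact sum_comm
    have hA : blockKernel N A w v = ∑ p, row p * blockIndicator N p w := by
      simp only [blockKernel_apply, row, sum_mul]
      exact sum_congr rfl fun p _ => sum_congr rfl fun q _ => by ring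
    rw [hB, hA, sum_mul_sum]
    exact sum_congr rfl fun j _ => sum_congr rfl fun p _ => by ring
  have hint : ∀ j p, Integrable (fun w => blockIndicator N j w * blockIndicator N p w)
      (volume.restrict (Icc 0 1)) := fun j p => by
    simp_rw [blockIndicator_mul]
    split_ifs
    exacts [integrable_blockIndicator j, integrable_zero _ _ _]
  calc kernelComp (blockKernel N B) (blockKernel N A) u v
      = ∑ j, ∑ p, col j * row p *
          ∫ w in Icc (0 : ℝ) 1, blockIndicator N j w * blockIndicator N p w := by
        simp_rw [kernelComp, hprod, ← integral_const_mul]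
        rw [integral_finsetSum _ fun j _ => integrable_finsetSum _ fun p _ =>
          (hint j p).const_mul _]
        exact sum_congr rfl fun j _ => integral_finsetSum _ fun p _ => (hint j p).const_mul _
    _ = ∑ j, ∑ i, ∑ q, 1 / N * (B i j * A j q) * blockIndicator N i u * blockIndicator N q v := by
        simp only [integral_blockIndicator_mul, mul_ite, mul_zero, sum_ite_eq, Finset.mem_univ,
          ite_true, col, row, sum_mul, mul_sum]
        refine sum_congr rfl fun j _ => ?_
        rw [sum_comm]
        exact sum_congr rfl fun i _ => sum_congr rfl fun q _ => by ring
    _ = blockKernel N ((1 / (N : ℝ)) • (B * A)) u v := by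
        simp only [blockKernel_apply, Matrix.smul_apply, Matrix.mul_apply, smul_eq_mul, mul_sum,
          sum_mul]
        rw [sum_comm]
        exact sum_congr rfl fun i _ => sum_comm

theorem blockKernel_flip (G : Matrix (Fin N) (Fin N) ℝ) :
    (fun u v => blockKernel N G v u) = blockKernel N Gᵀ := by
  ext u v
  simp only [blockKernel_apply, Matrix.transpose_apply]
  rw [sum_comm]
  exact sum_congr rfl fun j _ => sum_congr rfl fun i _ => by ring

theorem kernelIter_blockKernel (C : Matrix (Fin N) (Fin N) ℝ) (n : ℕ) :
    kernelIter (blockKernel N C) n = blockKernel N ((1 / (N : ℝ)) ^ n • C ^ (n + 1)) := by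
  induction n with
  | zero => simp [kernelIter]
  | succ n ih =>
    rw [kernelIter, ih, kernelComp_blockKernel, Matrix.mul_smul, smul_smul, ← pow_succ',
      ← pow_succ']

theorem blockKernel_apply_of_mem (M : Matrix (Fin N) (Fin N) ℝ) {j : Fin N} {v : ℝ}
    (hv : v ∈ Kblock N j) (u : ℝ) :
    blockKernel N M u v = ∑ i, M i j * blockIndicator N i u := by
  simp [blockKernel_apply, blockIndicator_of_mem hv]

theorem blockKernel_apply_of_forall_notMem (M : Matrix (Fin N) (Fin N) ℝ) {v : ℝ}
    (hv : ∀ j, v ∉ Kblock N j) (u : ℝ) : blockKernel N M u v = 0 := by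
  simp [blockKernel_apply, blockIndicator, indicator_of_notMem (hv _)]

theorem lintegral_blockKernel_of_mem {M : Matrix (Fin N) (Fin N) ℝ} (hM : ∀ i j, 0 ≤ M i j)
    {j : Fin N} {v : ℝ} (hv : v ∈ Kblock N j) :
    ∫⁻ u in Icc (0 : ℝ) 1, ENNReal.ofReal |blockKernel N M u v| =
      ENNReal.ofReal (∑ i, M i j / N) := by
  have hnonneg : ∀ u, 0 ≤ ∑ i, M i j * blockIndicator N i u := fun u =>
    sum_nonneg fun i _ => mul_nonneg (hM i j) (blockIndicator_nonneg i u)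
  have hint : Integrable (fun u => ∑ i, M i j * blockIndicator N i u)
      (volume.restrict (Icc 0 1)) :=
    integrable_finsetSum _ fun i _ => (integrable_blockIndicator i).const_mul _
  simp_rw [blockKernel_apply_of_mem M hv, abs_of_nonneg (hnonneg _)]
  rw [← ofReal_integral_eq_lintegral_ofReal hint (Eventually.of_forall hnonneg),
    integral_finsetSum _ fun i _ => (integrable_blockIndicator i).const_mul _]
  simp_rw [integral_const_mul, integral_blockIndicator, mul_one_div]

theorem kernelOpNorm_blockKernel {M : Matrix (Fin N) (Fin N) ℝ} (hM : ∀ i j, 0 ≤ M i j) :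
    kernelOpNorm (blockKernel N M) = ⨆ j, ENNReal.ofReal (∑ i, M i j / N) := by
  apply le_antisymm
  · refine iSup₂_le fun v _ => ?_
    by_cases hv : ∃ j, v ∈ Kblock N j
    · obtain ⟨j, hj⟩ := hv
      exact (lintegral_blockKernel_of_mem hM hj).trans_le
        (le_iSup (fun j => ENNReal.ofReal (∑ i, M i j / N)) j)
    · simp [blockKernel_apply_of_forall_notMem M (not_exists.mp hv)]
  · refine iSup_le fun j => ?_
    rw [← lintegral_blockKernel_of_mem hM (right_mem_Kblock j)]
    exact le_iSup₂ (f := fun v _ => ∫⁻ u in Icc (0 : ℝ) 1, ENNReal.ofReal |blockKernel N M u v|)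
      _ (Kblock_subset_unitInterval j (right_mem_Kblock j))

end blockKernel

theorem blockKernel_composition_matrix_general
    (N : ℕ) :
    (∀ A B : Matrix (Fin N) (Fin N) ℝ, ∀ u ∈ Icc (0:ℝ) 1, ∀ v ∈ Icc (0:ℝ) 1,
      kernelComp (blockKernel N B) (blockKernel N A) u v
        = blockKernel N ((1 / (N : ℝ)) • (B * A)) u v) ∧
    (∀ G : Matrix (Fin N) (Fin N) ℝ, (∀ i j, 0 ≤ G i j) → ∀ k : ℕ, 1 ≤ k →
      kernelOpNorm (kernelIter (fun u v => blockKernel N G v u) (k - 1))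
        = ENNReal.ofReal
            (⨆ i : Fin N, ∑ j : Fin N, (((1 / (N : ℝ)) • G) ^ k) i j)) := by
  refine ⟨fun A B u _ v _ => by rw [kernelComp_blockKernel], fun G hG k hk => ?_⟩
  obtain ⟨n, rfl⟩ : ∃ n, k = n + 1 := ⟨k - 1, by omega⟩
  have hM : ∀ i j, 0 ≤ ((1 / (N : ℝ)) ^ n • Gᵀ ^ (n + 1)) i j := fun i j =>
    mul_nonneg (by positivity) (Matrix.pow_apply_nonneg (fun i j => hG j i) _ i j)
  rw [blockKernel_flip, Nat.add_sub_cancel, kernelIter_blockKernel, kernelOpNorm_blockKernel hM,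
    ENNReal.ofReal_iSup_of_finite]
  refine iSup_congr fun i => congr_arg ENNReal.ofReal (sum_congr rfl fun j _ => ?_)
  rw [smul_pow, Matrix.smul_apply, Matrix.smul_apply, ← Matrix.transpose_pow,
    Matrix.transpose_apply, smul_eq_mul, smul_eq_mul, pow_succ]
  ring

/-- (a) composition of blockwise-constant kernels corresponds to the matrix
product scaled by `1/N`; (b) consequently, for a nonnegative matrix `G` with
`P = (1/N) G`, the `k`-fold composition of the transposed block kernel has operator norm
`max_i Σ_j (P^k)_{ij}`. -/
theorem blockKernel_composition_matrix
    (N : ℕ) (hN : 1 ≤ N) :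
    (∀ A B : Matrix (Fin N) (Fin N) ℝ, ∀ u ∈ Icc (0:ℝ) 1, ∀ v ∈ Icc (0:ℝ) 1,
      kernelComp (blockKernel N B) (blockKernel N A) u v
        = blockKernel N ((1 / (N : ℝ)) • (B * A)) u v) ∧
    (∀ G : Matrix (Fin N) (Fin N) ℝ, (∀ i j, 0 ≤ G i j) → ∀ k : ℕ, 1 ≤ k →
      kernelOpNorm (kernelIter (fun u v => blockKernel N G v u) (k - 1))
        = ENNReal.ofReal
            (⨆ i : Fin N, ∑ j : Fin N, (((1 / (N : ℝ)) • G) ^ k) i j)) :=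
  blockKernel_composition_matrix_general N
end
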